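/- Let (H, B) be a Rota–Baxter Hopf algebra of weight −1, define B̃ : H → H by B̃(x) = x₁ B(S(x₂)), and set x *_B y = B(x₁) y S(B(x₂)) x₃ and x *_{B̃} y = B̃(x₁) y S(B̃(x₂)) x₃. Then for all x, y ∈ H one has S(S(x) *_{B̃} S(y)) = x *_B y. -/

import Mathlib

open TensorProduct LinearMap

noncomputable section

universe u

variable {K H : Type u} [Field K] [CharZero K] [Ring H] [HopfAlgebra K H]

/-- The antipode of `H` as a `K`-linear map. -/
def aS (K H : Type u) [Field K] [Ring H] [HopfAlgebra K H] : H →ₗ[K] H :=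
  HopfAlgebra.antipode K

/-- Convolution-type composite: `conv f g x = f x₁ * g x₂` in Sweedler notation,
where the source may be any coalgebra `C`. -/
def conv {C : Type u} [AddCommGroup C] [Module K C] [Coalgebra K C]
    (f g : C →ₗ[K] H) : C →ₗ[K] H :=
  LinearMap.mul' K H ∘ₗ TensorProduct.map f g ∘ₗ Coalgebra.comul

/-- `wrap f g h (a ⊗ₜ c) = f a₁ * (g c * h a₂)` in Sweedler notation. -/
def wrap {C : Type u} [AddCommGroup C] [Module K C] [Coalgebra K C]
    (f : C →ₗ[K] H) (g : H →ₗ[K] H) (h : C →ₗ[K] H) : C ⊗[K] H →ₗ[K] H :=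
  LinearMap.mul' K H ∘ₗ
    TensorProduct.map f
      (LinearMap.mul' K H ∘ₗ TensorProduct.map g h ∘ₗ (TensorProduct.comm K C H).toLinearMap) ∘ₗ
    (TensorProduct.assoc K C C H).toLinearMap ∘ₗ
    TensorProduct.map Coalgebra.comul LinearMap.id

/-- The descendent product: `mulB B (x ⊗ₜ y) = B x₁ * (y * (S (B x₂) * x₃))`,
i.e. `x *_B y = B(x₁) y S(B(x₂)) x₃` in Sweedler notation. -/
def mulB (B : H →ₗ[K] H) : H ⊗[K] H →ₗ[K] H :=
  wrap B LinearMap.id (conv (aS K H ∘ₗ B) LinearMap.id)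

/-- `Bt B x = x₁ * B (S x₂)`, i.e. the operator `B̃`. -/
def Bt (B : H →ₗ[K] H) : H →ₗ[K] H := conv LinearMap.id (B ∘ₗ aS K H)

/-- `SB B x = S(B x₁) * (S x₂ * B x₃)`, the antipode `S_B` of the descendent Hopf algebra. -/
def SB (B : H →ₗ[K] H) : H →ₗ[K] H := conv (aS K H ∘ₗ B) (conv (aS K H) B)

/-- `H` is cocommutative. -/
def IsCocomm (K H : Type u) [Field K] [Ring H] [HopfAlgebra K H] : Prop :=
  ∀ x : H, (TensorProduct.comm K H H) (Coalgebra.comul x) = Coalgebra.comul x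

/-- `B` is a Rota–Baxter operator of weight `-1` on `H`: it is a coalgebra map and
`B x * B y = B (B(x₁) y S(B(x₂)) x₃)` in Sweedler notation. -/
def IsRotaBaxter (B : H →ₗ[K] H) : Prop :=
  (Coalgebra.comul ∘ₗ B = TensorProduct.map B B ∘ₗ Coalgebra.comul) ∧
  (Coalgebra.counit ∘ₗ B = Coalgebra.counit) ∧
  ∀ x y : H, B x * B y = B (mulB B (x ⊗ₜ[K] y))


/-!
For fixed `y`, the map `x ↦ x *_F y` is the convolution product `F ⋆ (y · S F) ⋆ id` of linear
endomorphisms of `H`. When `H` is cocommutative, `S` is an involutive coalgebra map and an algebra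
anti-homomorphism, so precomposition with `S` distributes over `⋆` and postcomposition with `S`
reverses it: `x ↦ S (S x *_F S y)` is `id ⋆ (F S · y) ⋆ S F S`. For `F = B̃` one has
`B̃ S = S ⋆ B`, and `id ⋆ S = 1` collapses this to `B ⋆ (y · S B) ⋆ id`, i.e. to `x ↦ x *_B y`.
-/

open WithConv

namespace LinearMap

open Coalgebra

variable {R C A : Type*} [CommSemiring R] [AddCommMonoid C] [Module R C] [Coalgebra R C]
  [Semiring A] [Algebra R A]

lemma toConv_mulLeft_comp_convMul (a : A) (f g : WithConv (C →ₗ[R] A)) :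
    toConv (mulLeft R a ∘ₗ (f * g).ofConv) = toConv (mulLeft R a ∘ₗ f.ofConv) * g := by
  ext c
  simp [(ℛ R c).convMul_apply, mul_assoc]

lemma toConv_mulRight_comp_convMul (a : A) (f g : WithConv (C →ₗ[R] A)) :
    toConv (mulRight R a ∘ₗ (f * g).ofConv) = f * toConv (mulRight R a ∘ₗ g.ofConv) := by
  ext c
  simp [(ℛ R c).convMul_apply, mul_assoc]

lemma toConv_mulRight_comp_mul (a : A) (f g : C →ₗ[R] A) :
    toConv (mulRight R a ∘ₗ f) * toConv g = toConv f * toConv (mulLeft R a ∘ₗ g) := by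
  ext c
  simp [(ℛ R c).convMul_apply, mul_assoc]

end LinearMap

namespace HopfAlgebra

open Coalgebra

section

variable {R A C : Type*} [CommSemiring R] [Semiring A] [HopfAlgebra R A]
  [AddCommMonoid C] [Module R C] [Coalgebra R C]

lemma antipode_comp_algebraMap_comp_counit :
    antipode R ∘ₗ (Algebra.linearMap R A ∘ₗ counit) =
      Algebra.linearMap R A ∘ₗ counit (A := C) := by
  ext c
  simp [Algebra.algebraMap_eq_smul_one]

lemma toConv_antipode_comp_convMul [IsCocomm R C] (f g : WithConv (C →ₗ[R] A)) :
    toConv (antipode R ∘ₗ (f * g).ofConv) =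
      toConv (antipode R ∘ₗ g.ofConv) * toConv (antipode R ∘ₗ f.ofConv) := by
  ext c
  have h := congr($(antipode_comp_mul_comp_comm (R := R) (A := A))
    (TensorProduct.map g.ofConv f.ofConv (comul c)))
  simp only [LinearMap.comp_apply, LinearEquiv.coe_coe] at h
  rw [← TensorProduct.map_comm, comm_comul] at h
  simp [h, TensorProduct.map_map]

end

variable {R A : Type*} [CommSemiring R] [Semiring A] [HopfAlgebra R A]

lemma antipode_comp_mulLeft (a : A) :
    antipode R ∘ₗ LinearMap.mulLeft R a =
      LinearMap.mulRight R (antipode R a) ∘ₗ antipode R := by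
  ext b
  simp [antipode_mul_antidistrib]

lemma toConv_algHom_comp_antipode_mul {B : Type*} [Semiring B] [Algebra R B]
    (φ : A →ₐ[R] B) : toConv (φ.toLinearMap ∘ₗ antipode R) * toConv φ.toLinearMap = 1 := by
  have h :=
    LinearMap.algHom_comp_convMul_distrib φ (toConv (antipode R)) (toConv LinearMap.id)
  rw [LinearMap.antipode_mul_id] at h
  ext c
  simpa [LinearMap.convOne_def] using congr($h.symm c)

/- `Δ = i₁ ⋆ i₂` for the two inclusions `A → A ⊗ A`, which are algebra maps with convolution
inverses `iⱼ ∘ S`; hence `(i₂ ∘ S) ⋆ (i₁ ∘ S)` is a left inverse of `Δ`, while `Δ ∘ S` is a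
right inverse. -/
lemma comul_comp_antipode :
    comul ∘ₗ antipode R = TensorProduct.map (antipode R) (antipode R) ∘ₗ
      (TensorProduct.comm R A A).toLinearMap ∘ₗ comul (R := R) (A := A) := by
  let i₁ : A →ₐ[R] A ⊗[R] A := Algebra.TensorProduct.includeLeft
  let i₂ : A →ₐ[R] A ⊗[R] A := Algebra.TensorProduct.includeRight
  have hcomul :
      toConv i₁.toLinearMap * toConv i₂.toLinearMap = toConv (comul (R := R) (A := A)) := by
    have h : LinearMap.mul' R (A ⊗[R] A) ∘ₗ
        TensorProduct.map i₁.toLinearMap i₂.toLinearMap = .id := by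
      ext; simp [i₁, i₂]
    ext c
    exact congr($h (comul c))
  have hinv : toConv (i₂.toLinearMap ∘ₗ antipode R) *
      toConv (i₁.toLinearMap ∘ₗ antipode R) * toConv comul = 1 := by
    rw [← hcomul, mul_assoc, ← mul_assoc (toConv (i₁.toLinearMap ∘ₗ antipode R)),
      toConv_algHom_comp_antipode_mul, one_mul, toConv_algHom_comp_antipode_mul]
  have hflip : LinearMap.mul' R (A ⊗[R] A) ∘ₗ
      TensorProduct.map (i₂.toLinearMap ∘ₗ antipode R) (i₁.toLinearMap ∘ₗ antipode R) =
      TensorProduct.map (antipode R) (antipode R) ∘ₗ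
        (TensorProduct.comm R A A).toLinearMap := by
    ext; simp [i₁, i₂]
  calc comul ∘ₗ antipode R
      = (toConv (i₂.toLinearMap ∘ₗ antipode R) *
          toConv (i₁.toLinearMap ∘ₗ antipode R)).ofConv :=
        congr_arg ofConv (left_inv_eq_right_inv hinv LinearMap.comul_right_inv).symm
    _ = _ := by
      rw [LinearMap.convMul_def, ofConv_toConv, ← LinearMap.comp_assoc, hflip,
        LinearMap.comp_assoc]

variable [IsCocomm R A]

lemma antipode_comp_antipode : antipode R ∘ₗ antipode R = LinearMap.id (R := R) (M := A) := by
  refine toConv_injective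
    (left_inv_eq_right_inv (a := toConv (antipode R)) ?_ LinearMap.antipode_mul_id)
  have h := toConv_antipode_comp_convMul (toConv LinearMap.id) (toConv (antipode R (A := A)))
  rw [LinearMap.id_mul_antipode] at h
  simpa [LinearMap.convOne_def, antipode_comp_algebraMap_comp_counit] using h.symm

lemma antipode_antipode (a : A) : antipode R (antipode R a) = a :=
  congr($antipode_comp_antipode a)

variable (R A) in
def antipodeCoalgHom : A →ₗc[R] A where
  toLinearMap := antipode R
  counit_comp := counit_comp_antipode
  map_comp_comul := by rw [comul_comp_antipode, comm_comp_comul]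

lemma toConv_convMul_comp_antipode {B : Type*} [Semiring B] [Algebra R B]
    (f g : WithConv (A →ₗ[R] B)) :
    toConv ((f * g).ofConv ∘ₗ antipode R) =
      toConv (f.ofConv ∘ₗ antipode R) * toConv (g.ofConv ∘ₗ antipode R) :=
  congr_arg toConv (LinearMap.convMul_comp_coalgHom_distrib f g (antipodeCoalgHom R A))

end HopfAlgebra

open LinearMap HopfAlgebra

section DescendentProduct

variable {k A : Type u} [Field k] [Ring A] [HopfAlgebra k A]

lemma wrap_tmul {C : Type u} [AddCommGroup C] [Module k C] [Coalgebra k C]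
    (f : C →ₗ[k] A) (g : A →ₗ[k] A) (h : C →ₗ[k] A) (c : C) (y : A) :
    wrap f g h (c ⊗ₜ y) = (toConv f * toConv (mulLeft k (g y) ∘ₗ h)) c := by
  simp only [wrap, convMul_apply, comp_apply, TensorProduct.map_tmul, id_apply]
  induction Coalgebra.comul (R := k) c using TensorProduct.induction_on with
  | zero => simp
  | tmul a b => simp
  | add p q hp hq => simp only [add_tmul, map_add, hp, hq]

lemma mulB_tmul (F : A →ₗ[k] A) (x y : A) :
    mulB F (x ⊗ₜ y) =
      (toConv F * toConv (mulLeft k y ∘ₗ antipode k ∘ₗ F) * toConv LinearMap.id :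
        WithConv (A →ₗ[k] A)) x := by
  rw [mulB, wrap_tmul, id_apply, mul_assoc,
    ← toConv_mulLeft_comp_convMul y (toConv (antipode k ∘ₗ F)) (toConv LinearMap.id)]
  rfl

variable [Coalgebra.IsCocomm k A]

lemma antipode_mulB_antipode_tmul (F : A →ₗ[k] A) (x y : A) :
    antipode k (mulB F (antipode k x ⊗ₜ antipode k y)) =
      (toConv LinearMap.id * toConv (mulRight k y ∘ₗ F ∘ₗ antipode k) *
        toConv (antipode k ∘ₗ F ∘ₗ antipode k) : WithConv (A →ₗ[k] A)) x := by
  rw [mulB_tmul]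
  set P : WithConv (A →ₗ[k] A) :=
    toConv F * toConv (mulLeft k (antipode k y) ∘ₗ antipode k ∘ₗ F) * toConv LinearMap.id
  have hP : P.ofConv ∘ₗ antipode k = (toConv (F ∘ₗ antipode k) *
      toConv (mulLeft k (antipode k y) ∘ₗ antipode k ∘ₗ F ∘ₗ antipode k) *
      toConv (antipode k)).ofConv := by
    apply toConv_injective
    rw [toConv_convMul_comp_antipode, toConv_convMul_comp_antipode]
    rfl
  have key : toConv (antipode k ∘ₗ P.ofConv ∘ₗ antipode k) = toConv LinearMap.id *
      toConv (mulRight k y ∘ₗ F ∘ₗ antipode k) * toConv (antipode k ∘ₗ F ∘ₗ antipode k) := by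
    rw [hP, toConv_antipode_comp_convMul, toConv_antipode_comp_convMul]
    simp only [← comp_assoc, antipode_comp_mulLeft, antipode_comp_antipode]
    rw [mul_assoc]
    congr 3
    ext z
    simp [antipode_antipode]
  exact congr($key x)

lemma Bt_comp_antipode (B : A →ₗ[k] A) :
    Bt B ∘ₗ antipode k = (toConv (antipode k) * toConv B).ofConv := by
  have hBt : Bt B = (toConv LinearMap.id * toConv (B ∘ₗ antipode k)).ofConv := rfl
  apply toConv_injective
  rw [hBt, toConv_convMul_comp_antipode, comp_assoc, antipode_comp_antipode]
  rfl

end DescendentProduct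

theorem stmt6_general (B : H →ₗ[K] H) (hcc : IsCocomm K H) :
    ∀ x y : H, aS K H (mulB (Bt B) (aS K H x ⊗ₜ[K] aS K H y)) = mulB B (x ⊗ₜ[K] y) := by
  have : Coalgebra.IsCocomm K H := ⟨LinearMap.ext hcc⟩
  intro x y
  have hρ : toConv (mulRight K y ∘ₗ Bt B ∘ₗ antipode K) =
      toConv (antipode K) * toConv (mulRight K y ∘ₗ B) := by
    rw [Bt_comp_antipode, toConv_mulRight_comp_convMul]
  have hS : toConv (antipode K ∘ₗ Bt B ∘ₗ antipode K) =
      toConv (antipode K ∘ₗ B) * toConv LinearMap.id := by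
    rw [Bt_comp_antipode, toConv_antipode_comp_convMul, antipode_comp_antipode]
  rw [aS, antipode_mulB_antipode_tmul, mulB_tmul, hρ, hS]
  simp only [← mul_assoc, id_mul_antipode, one_mul]
  rw [toConv_mulRight_comp_mul]

/-- `S(S(x) *_{B̃} S(y)) = x *_B y`. -/
theorem stmt6 (B : H →ₗ[K] H) (hcc : IsCocomm K H) (hB : IsRotaBaxter B) :
    ∀ x y : H, aS K H (mulB (Bt B) (aS K H x ⊗ₜ[K] aS K H y)) = mulB B (x ⊗ₜ[K] y) :=
  stmt6_general B hcc

end
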